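/- arXiv:1106.3854 — 4 statements merged into one kernel-verified Lean document; each statement's English description precedes it below -/
import Mathlib

section
/- Let R be a unique factorization domain and let f, g be nonzero elements of R such that 4f³ + 27g² = 0 (with 2, 3 invertible in R, or R an algebra over a field of characteristic 0). Then there exists u ∈ R such that f = -(1/3)u² and g = (2/27)u³. -/
/-- Lemma B.1: In a UFD containing ℚ, if nonzero `f`, `g` satisfy `4f³ + 27g² = 0`,
then there exists `u` with `f = -(1/3)u²` and `g = (2/27)u³`. -/
theorem tate_lemma1 (R : Type*) [CommRing R] [IsDomain R] [UniqueFactorizationMonoid R]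
    [Algebra ℚ R] (f g : R) (hf : f ≠ 0) (hg : g ≠ 0)
    (h : 4 * f ^ 3 + 27 * g ^ 2 = 0) :
    ∃ u : R, f = algebraMap ℚ R (-1/3) * u ^ 2 ∧ g = algebraMap ℚ R (2/27) * u ^ 3 := by
  have hinj : Function.Injective (algebraMap ℚ R) := (algebraMap ℚ R).injective
  haveI : CharZero R := charZero_of_injective_algebraMap hinj
  set a : R := -3 * f with ha
  set b : R := algebraMap ℚ R (27/2) * g with hb
  have ha0 : a ≠ 0 := by
    simp only [ha]
    exact mul_ne_zero (by norm_num) hf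
  have h2b : (2 : R) * b = 27 * g := by
    have h2 : (2 : R) = algebraMap ℚ R 2 := (map_ofNat (algebraMap ℚ R) 2).symm
    rw [hb, ← mul_assoc, h2, ← map_mul]
    norm_num
    exact Or.inl (map_ofNat _ 27)
  have hab : a ^ 3 = b ^ 2 := by
    have h4 : (4 : R) * (a ^ 3) = 4 * (b ^ 2) := by
      have : (4 : R) * b ^ 2 = (2 * b) ^ 2 := by ring
      rw [this, h2b]
      linear_combination (-27 : R) * h
    have : (4 : R) ≠ 0 := by norm_num
    exact mul_left_cancel₀ this h4
  have hdvd : a ∣ b := by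
    rw [← IsIntegrallyClosed.pow_dvd_pow_iff (n := 2) (by norm_num)]
    calc a ^ 2 ∣ a ^ 3 := pow_dvd_pow a (by norm_num)
      _ = b ^ 2 := hab
  obtain ⟨u, hu⟩ := hdvd
  have hu2 : u ^ 2 = a := by
    have : a ^ 2 * u ^ 2 = a ^ 2 * a := by
      have : (a * u) ^ 2 = a ^ 3 := by rw [← hu, hab]
      linear_combination this
    exact mul_left_cancel₀ (pow_ne_zero 2 ha0) this
  have hu3 : u ^ 3 = b := by
    calc u ^ 3 = u ^ 2 * u := by ring
      _ = a * u := by rw [hu2]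
      _ = b := hu.symm
  refine ⟨u, ?_, ?_⟩
  · rw [hu2, ha]
    have : algebraMap ℚ R (-1/3) * (-3 : R) = 1 := by
      have h3 : (-3 : R) = algebraMap ℚ R (-3) := by
        rw [map_neg, map_ofNat]
      rw [h3, ← map_mul]; norm_num
    calc f = (algebraMap ℚ R (-1/3) * (-3)) * f := by rw [this, one_mul]
      _ = algebraMap ℚ R (-1/3) * (-3 * f) := by ring
  · rw [hu3, hb, ← mul_assoc, ← map_mul]
    norm_num
end

section
/- Let R be a unique factorization domain and let s, g, f, t ∈ R satisfy s³·g - s²·t·f - t³ = 0. Then s divides t. -/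
/-- Lemma B.4: In a UFD, if `s³·g - s²·t·f - t³ = 0` then `s ∣ t`. -/
theorem tate_lemma4 (R : Type*) [CommRing R] [IsDomain R] [UniqueFactorizationMonoid R]
    (s g f t : R) (h : s ^ 3 * g - s ^ 2 * t * f - t ^ 3 = 0) :
    s ∣ t := by
  suffices H : ∀ s : R, ∀ g f t : R, s ^ 3 * g - s ^ 2 * t * f - t ^ 3 = 0 → s ∣ t from
    H s g f t h
  clear h s g f t
  intro s
  induction s using UniqueFactorizationMonoid.induction_on_prime with
  | h₁ =>
    intro g f t h
    have ht : t ^ 3 = 0 := by linear_combination -h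
    have : t = 0 := by
      exact pow_eq_zero_iff (by norm_num) |>.mp ht
    simp [this]
  | h₂ x hx =>
    intro g f t h
    exact hx.dvd
  | h₃ a p ha hp ih =>
    intro g f t h
    have hpt : p ∣ t := by
      have : p ∣ t ^ 3 := ⟨(p * a) ^ 2 * a * g - p * a ^ 2 * t * f, by linear_combination -h⟩
      exact hp.dvd_of_dvd_pow this
    obtain ⟨t', rfl⟩ := hpt
    have key : a ^ 3 * g - a ^ 2 * t' * f - t' ^ 3 = 0 := by
      have hp0 : p ≠ 0 := hp.ne_zero
      have : p ^ 3 * (a ^ 3 * g - a ^ 2 * t' * f - t' ^ 3) = 0 := by linear_combination h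
      have := mul_eq_zero.mp this
      rcases this with h' | h'
      · exact absurd h' (pow_ne_zero 3 hp0)
      · exact h'
    exact mul_dvd_mul_left p (ih g f t' key)
end

section
/- Let A be a commutative ℚ-algebra and u₀, f₁, g̃₂ ∈ A. For the Tate I₂ form y² = x³ + u₀x² + (f₁z + O(z²))x + (g̃₂z² + O(z³)), the Weierstrass discriminant satisfies Δ = u₀²(4u₀g̃₂ - f₁²)·z² + O(z³). -/
/-!
Completing the cube turns `x³ + u₀x² + Vx + W` into `x³ + fx + g` without changing the
discriminant, so `4f³ + 27g² = -disc = 4V³ + 27W² - u₀²V² + 4u₀³W - 18u₀VW`. Since `V = O(z)` and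
`W = O(z²)`, every monomial is `O(z²)`, and only `-u₀²V² + 4u₀³W` reaches `z²`.
-/

open PowerSeries

theorem Cubic.discr_monic_eq_neg_completed_cube {R : Type*} [CommRing R] {a : R} (ha : 3 * a = 1)
    (b c d : R) :
    (⟨1, b, c, d⟩ : Cubic R).discr =
      -(4 * (-a * b ^ 2 + c) ^ 3 + 27 * (2 * a ^ 3 * b ^ 3 - a * b * c + d) ^ 2) := by
  unfold Cubic.discr
  grind

namespace PowerSeries

variable {A : Type*} [CommRing A]

theorem discr_C_X_mul_X_sq_mul (u : A) (V W : A⟦X⟧) :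
    (⟨1, C u, X * V, X ^ 2 * W⟩ : Cubic A⟦X⟧).discr =
      X ^ 2 * (C u ^ 2 * V ^ 2 - 4 * C u ^ 3 * W + X * (18 * C u * V * W - 4 * V ^ 3)
        - X ^ 2 * (27 * W ^ 2)) := by
  unfold Cubic.discr
  ring

theorem coeff_discr_of_X_dvd (u : A) {V W : A⟦X⟧} (hV : X ∣ V) (hW : X ^ 2 ∣ W) :
    coeff 0 (⟨1, C u, V, W⟩ : Cubic A⟦X⟧).discr = 0 ∧
    coeff 1 (⟨1, C u, V, W⟩ : Cubic A⟦X⟧).discr = 0 ∧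
    coeff 2 (⟨1, C u, V, W⟩ : Cubic A⟦X⟧).discr = u ^ 2 * (coeff 1 V ^ 2 - 4 * u * coeff 2 W) := by
  obtain ⟨V, rfl⟩ := hV
  obtain ⟨W, rfl⟩ := hW
  rw [discr_C_X_mul_X_sq_mul]
  refine ⟨by simp [coeff_X_pow_mul'], by simp [coeff_X_pow_mul'], ?_⟩
  simp only [coeff_X_pow_mul', le_refl, if_true, tsub_self, coeff_zero_eq_constantCoeff,
    coeff_succ_X_mul 0, map_sub, map_add, map_mul, map_pow, map_ofNat, constantCoeff_C,
    constantCoeff_X, nonpos_iff_eq_zero, OfNat.ofNat_ne_zero, if_false]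
  ring

end PowerSeries

/-- Equation (4.4): for the Tate `I₂` form `y² = x³ + u₀x² + (f₁z + O(z²))x + (g̃₂z² + O(z³))`,
the Weierstrass discriminant satisfies `Δ = u₀²(4u₀g̃₂ - f₁²)z² + O(z³)`. -/
theorem tate_I2_discriminant (A : Type*) [CommRing A] [Algebra ℚ A]
    (u₀ : A) (V W f g : PowerSeries A)
    (hV : PowerSeries.constantCoeff V = 0)
    (hW0 : PowerSeries.constantCoeff W = 0) (hW1 : (PowerSeries.coeff 1) W = 0)
    (hf : f = PowerSeries.C (algebraMap ℚ A (-1/3) * u₀ ^ 2) + V)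
    (hg : g = PowerSeries.C (algebraMap ℚ A (2/27) * u₀ ^ 3)
            - PowerSeries.C (algebraMap ℚ A (1/3) * u₀) * V + W) :
    (PowerSeries.coeff 0) (4 * f ^ 3 + 27 * g ^ 2) = 0 ∧
    (PowerSeries.coeff 1) (4 * f ^ 3 + 27 * g ^ 2) = 0 ∧
    (PowerSeries.coeff 2) (4 * f ^ 3 + 27 * g ^ 2)
        = u₀ ^ 2 * (4 * u₀ * (PowerSeries.coeff 2) W - ((PowerSeries.coeff 1) V) ^ 2) := by
  set a : A := algebraMap ℚ A (1 / 3)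
  have h3 : 3 * C a = 1 := by
    rw [← map_ofNat C, ← map_mul, ← map_ofNat (algebraMap ℚ A), ← map_mul]
    norm_num
  have hf' : f = -C a * C u₀ ^ 2 + V := by
    rw [hf, show (-1 / 3 : ℚ) = -(1 / 3) by norm_num]
    simp only [map_mul, map_neg, map_pow, a]
  have hg' : g = 2 * C a ^ 3 * C u₀ ^ 3 - C a * C u₀ * V + W := by
    rw [hg, show (2 / 27 : ℚ) = 2 * (1 / 3) ^ 3 by norm_num]
    simp only [map_mul, map_pow, map_ofNat, a]
  have hΔ : 4 * f ^ 3 + 27 * g ^ 2 = -(⟨1, C u₀, V, W⟩ : Cubic A⟦X⟧).discr := by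
    rw [Cubic.discr_monic_eq_neg_completed_cube h3, hf', hg', neg_neg]
  have hW : X ^ 2 ∣ W := X_pow_dvd_iff.2 fun
    | 0, _ => (coeff_zero_eq_constantCoeff_apply W).trans hW0
    | 1, _ => hW1
  obtain ⟨h0, h1, h2⟩ := coeff_discr_of_X_dvd u₀ (X_dvd_iff.2 hV) hW
  rw [hΔ, map_neg, map_neg, map_neg, h0, h1, h2]
  exact ⟨neg_zero, neg_zero, by ring⟩
end

section
/- Let A be a commutative ℚ-algebra and μ, s₀, t₁, f₂, g̃₃ ∈ A. For the equation y² = x³ + (1/4)μs₀²x² + ((1/2)μs₀t₁z + f₂z² + O(z³))x + ((1/4)μt₁²z² + g̃₃z³ + O(z⁴)), the Weierstrass discriminant satisfies Δ = (1/16)μ³s₀³(s₀³g̃₃ - s₀²t₁f₂ - t₁³)·z³ + O(z⁴). -/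
open PowerSeries

/-!
Completing the cube in `y² = x³ + a x² + V x + W` gives `f = V - a²/3`, `g = 2a³/27 - aV/3 + W`,
and `4f³ + 27g²` is minus the discriminant of `x³ + a x² + V x + W`. For `V = O(z)` and `W = O(z²)`
that discriminant is `a²V² - 4a³W + 18aVW - 4V³ + O(z⁴)`, so its coefficients up to `z³` involve
only `v₁, v₂, w₂, w₃`. The `z²` coefficient `a²(v₁² - 4a w₂)` vanishes because the ansatz has
`v₁² = 4a w₂`.
-/

theorem Cubic.four_mul_cube_add_27_mul_sq_eq_neg_discr {R : Type*} [CommRing R] [Algebra ℚ R]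
    (a b c : R) :
    4 * (algebraMap ℚ R (-1/3) * a ^ 2 + b) ^ 3
      + 27 * (algebraMap ℚ R (2/27) * a ^ 3 - algebraMap ℚ R (1/3) * a * b + c) ^ 2
      = -(⟨1, a, b, c⟩ : Cubic R).discr := by
  simp only [Cubic.discr]
  algebra

namespace PowerSeries

variable {A : Type*} [CommRing A]

theorem discr_X_mul_X_sq_mul (a : A) (V W : A⟦X⟧) :
    (⟨1, C a, X * V, X ^ 2 * W⟩ : Cubic A⟦X⟧).discr
      = X ^ 2 * (C (a ^ 2) * V ^ 2 - C (4 * a ^ 3) * W)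
        + X ^ 3 * (C (18 * a) * (V * W) - C 4 * V ^ 3) - X ^ 4 * (C 27 * W ^ 2) := by
  simp only [Cubic.discr, map_mul, map_pow, map_ofNat]
  ring

theorem coeff_discr_of_X_dvd_of_X_sq_dvd (a : A) {V W : A⟦X⟧} (hV : X ∣ V) (hW : X ^ 2 ∣ W) :
    let Δ := (⟨1, C a, V, W⟩ : Cubic A⟦X⟧).discr
    coeff 0 Δ = 0 ∧ coeff 1 Δ = 0 ∧ coeff 2 Δ = a ^ 2 * coeff 1 V ^ 2 - 4 * a ^ 3 * coeff 2 W ∧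
      coeff 3 Δ = 2 * a ^ 2 * coeff 1 V * coeff 2 V - 4 * a ^ 3 * coeff 3 W
        + 18 * a * coeff 1 V * coeff 2 W - 4 * coeff 1 V ^ 3 := by
  obtain ⟨V, rfl⟩ := hV
  obtain ⟨W, rfl⟩ := hW
  intro Δ
  simp only [Δ, discr_X_mul_X_sq_mul, map_add, map_sub, coeff_X_pow_mul', coeff_succ_X_mul,
    coeff_C_mul]
  norm_num [sq, pow_three, coeff_one_mul]
  ring

end PowerSeries

/-- Step 3 of the Tate algorithm for `Iₘ` (the new `I₃` ansatz, equation 4.9): for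
`y² = x³ + (1/4)μs₀²·x² + ((1/2)μs₀t₁z + f₂z² + O(z³))x + ((1/4)μt₁²z² + g̃₃z³ + O(z⁴))`,
the Weierstrass discriminant satisfies
`Δ = (1/16)μ³s₀³(s₀³g̃₃ - s₀²t₁f₂ - t₁³)z³ + O(z⁴)`. -/
theorem tate_I3_discriminant (A : Type*) [CommRing A] [Algebra ℚ A]
    (μ s₀ t₁ f₂ g₃ : A) (V W f g : PowerSeries A)
    (hV0 : PowerSeries.constantCoeff (R := A) V = 0)
    (hV1 : (PowerSeries.coeff (R := A) 1) V = algebraMap ℚ A (1/2) * μ * s₀ * t₁)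
    (hV2 : (PowerSeries.coeff (R := A) 2) V = f₂)
    (hW0 : PowerSeries.constantCoeff (R := A) W = 0) (hW1 : (PowerSeries.coeff (R := A) 1) W = 0)
    (hW2 : (PowerSeries.coeff (R := A) 2) W = algebraMap ℚ A (1/4) * μ * t₁ ^ 2)
    (hW3 : (PowerSeries.coeff (R := A) 3) W = g₃)
    (hf : f = PowerSeries.C (R := A) (algebraMap ℚ A (-1/3) * (algebraMap ℚ A (1/4) * μ * s₀ ^ 2) ^ 2) + V)
    (hg : g = PowerSeries.C (R := A) (algebraMap ℚ A (2/27) * (algebraMap ℚ A (1/4) * μ * s₀ ^ 2) ^ 3)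
            - PowerSeries.C (R := A) (algebraMap ℚ A (1/3) * (algebraMap ℚ A (1/4) * μ * s₀ ^ 2)) * V
            + W) :
    (PowerSeries.coeff (R := A) 0) (4 * f ^ 3 + 27 * g ^ 2) = 0 ∧
    (PowerSeries.coeff (R := A) 1) (4 * f ^ 3 + 27 * g ^ 2) = 0 ∧
    (PowerSeries.coeff (R := A) 2) (4 * f ^ 3 + 27 * g ^ 2) = 0 ∧
    (PowerSeries.coeff (R := A) 3) (4 * f ^ 3 + 27 * g ^ 2)
        = algebraMap ℚ A (1/16) * μ ^ 3 * s₀ ^ 3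
            * (s₀ ^ 3 * g₃ - s₀ ^ 2 * t₁ * f₂ - t₁ ^ 3) := by
  have hΔ : 4 * f ^ 3 + 27 * g ^ 2
      = -(⟨1, C (algebraMap ℚ A (1/4) * μ * s₀ ^ 2), V, W⟩ : Cubic A⟦X⟧).discr := by
    rw [hf, hg, ← Cubic.four_mul_cube_add_27_mul_sq_eq_neg_discr]
    simp only [map_mul, map_pow, ← PowerSeries.algebraMap_apply]
  have hW : X ^ 2 ∣ W := X_pow_dvd_iff.2 fun m hm => by
    interval_cases m
    exacts [(coeff_zero_eq_constantCoeff_apply W).trans hW0, hW1]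
  obtain ⟨h0, h1, h2, h3⟩ := coeff_discr_of_X_dvd_of_X_sq_dvd (algebraMap ℚ A (1/4) * μ * s₀ ^ 2)
    (X_dvd_iff.2 hV0) hW
  simp only [hΔ, map_neg, h0, h1, h2, h3, hV1, hV2, hW2, hW3, neg_zero, true_and]
  constructor <;> algebra
end
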